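/- arXiv:2603.14263 — 4 statements merged into one kernel-verified Lean document; each statement's English description precedes it below -/
import Mathlib

section
/- Assume the centered scatter matrix S(A) = A Q_m Aᵀ is positive definite. Then for every unit vector v ∈ ℝⁿ, the directional width of the polyhedral localization set satisfies width_v(𝒳_d) ≤ (1/2) wᵀ |Q_m Aᵀ S(A)⁻¹ v|, where the absolute value of a vector is taken entrywise. -/
open Matrix
open scoped InnerProductSpace

noncomputable section

/-- Reinterpret a plain vector as a point of Euclidean space (with the ℓ² norm). -/
def toE {n : ℕ} (v : Fin n → ℝ) : EuclideanSpace ℝ (Fin n) := WithLp.toLp 2 v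

/-- The all-ones m×m matrix 𝟙𝟙ᵀ. -/
def onesM (m : ℕ) : Matrix (Fin m) (Fin m) ℝ := Matrix.of fun _ _ => 1

/-- The centering projector Q_m = I_m − (1/m)𝟙𝟙ᵀ. -/
def Qm (m : ℕ) : Matrix (Fin m) (Fin m) ℝ := 1 - (m : ℝ)⁻¹ • onesM m

/-- The i-th anchor a⁽ⁱ⁾, i.e. the i-th column of A, as a Euclidean point. -/
def colE {n m : ℕ} (A : Matrix (Fin n) (Fin m) ℝ) (i : Fin m) : EuclideanSpace ℝ (Fin n) :=
  toE fun k => A k i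

/-- The vector ω ∈ ℝᵐ with entries ωᵢ = ‖a⁽ⁱ⁾‖₂². -/
def omegaV {n m : ℕ} (A : Matrix (Fin n) (Fin m) ℝ) : Fin m → ℝ := fun i => ‖colE A i‖ ^ 2

/-- The polyhedral localization set
𝒳_d = {x : ∃ α, ξ⁻ ≤ Q_m ω − 2 Q_m Aᵀ x + α𝟙 ≤ ξ⁺}. -/
def Xd {n m : ℕ} (A : Matrix (Fin n) (Fin m) ℝ) (xim xip : Fin m → ℝ) :
    Set (EuclideanSpace ℝ (Fin n)) :=
  {x | ∃ α : ℝ,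
      xim ≤ (Qm m).mulVec (omegaV A) - (2 : ℝ) • ((Qm m * Aᵀ).mulVec x) + α • (1 : Fin m → ℝ) ∧
      (Qm m).mulVec (omegaV A) - (2 : ℝ) • ((Qm m * Aᵀ).mulVec x) + α • (1 : Fin m → ℝ) ≤ xip}

/-- The intersection ℋ of the upper-range balls: ℋ = ∩ᵢ {x : ‖x − a⁽ⁱ⁾‖₂ ≤ √ξᵢ⁺}. -/
def Hset {n m : ℕ} (A : Matrix (Fin n) (Fin m) ℝ) (xip : Fin m → ℝ) :
    Set (EuclideanSpace ℝ (Fin n)) :=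
  {x | ∀ i, ‖x - colE A i‖ ≤ Real.sqrt (xip i)}

/-- Support function h_Ω(v) = sup_{x∈Ω} vᵀx. -/
def suppF {n : ℕ} (Ω : Set (EuclideanSpace ℝ (Fin n))) (v : EuclideanSpace ℝ (Fin n)) : ℝ :=
  sSup ((fun x => ⟪v, x⟫_ℝ) '' Ω)

/-- ψ_Ω(v) = h_Ω(v) + h_Ω(−v). -/
def psiH {n : ℕ} (Ω : Set (EuclideanSpace ℝ (Fin n))) (v : EuclideanSpace ℝ (Fin n)) : ℝ :=
  suppF Ω v + suppF Ω (-v)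

/-- Directional width width_v(Ω) = sup_{x∈Ω} vᵀx − inf_{x∈Ω} vᵀx. -/
def dwidth {n : ℕ} (v : EuclideanSpace ℝ (Fin n)) (Ω : Set (EuclideanSpace ℝ (Fin n))) : ℝ :=
  sSup ((fun x => ⟪v, x⟫_ℝ) '' Ω) - sInf ((fun x => ⟪v, x⟫_ℝ) '' Ω)

/-- The aggregated squared radius ρ(p)² = pᵀ(ξ⁺ − ω) + ‖Ap‖₂². -/
def rho2 {n m : ℕ} (A : Matrix (Fin n) (Fin m) ℝ) (xip : Fin m → ℝ) (p : Fin m → ℝ) : ℝ :=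
  p ⬝ᵥ (xip - omegaV A) + ‖toE (A.mulVec p)‖ ^ 2

/-!
Write `y = Q_m Aᵀ S(A)⁻¹ v`. Then `A y = v` and `Q_m y = y`, so `𝟙ᵀ y = 0` and
`yᵀ Q_m Aᵀ x = vᵀ x`. Pairing `y` with the residual `z = Q_m ω − 2 Q_m Aᵀ x + α 𝟙 ∈ [ξ⁻, ξ⁺]` of a
point `x ∈ 𝒳_d` therefore gives `yᵀ z = yᵀ Q_m ω − 2 vᵀ x`, and for two points `x, x'` the difference
`2 (vᵀ x − vᵀ x') = yᵀ (z' − z)` is at most `wᵀ |y|`, since `z, z'` lie in the same box.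
-/

section Centering

variable {m : ℕ}

theorem onesM_mul_onesM : onesM m * onesM m = (m : ℝ) • onesM m := by
  ext i j
  simp [onesM, Matrix.mul_apply]

theorem Qm_transpose : (Qm m)ᵀ = Qm m := by
  ext i j
  simp [Qm, onesM, Matrix.one_apply, eq_comm]

theorem Qm_mul_Qm : Qm m * Qm m = Qm m := by
  rcases Nat.eq_zero_or_pos m with rfl | hm
  · exact Subsingleton.elim _ _
  have hm' : (m : ℝ) ≠ 0 := Nat.cast_ne_zero.mpr hm.ne'
  unfold Qm
  simp only [Matrix.mul_sub, Matrix.sub_mul, mul_one, one_mul, Matrix.mul_smul,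
    Matrix.smul_mul, onesM_mul_onesM, smul_smul, inv_mul_cancel₀ hm', one_smul, sub_self,
    smul_zero, sub_zero]

theorem Qm_mulVec_one : Qm m *ᵥ (1 : Fin m → ℝ) = 0 := by
  ext i
  have hm : (m : ℝ) ≠ 0 := Nat.cast_ne_zero.mpr (Fin.pos i).ne'
  simp [Qm, Matrix.mulVec, dotProduct, onesM, Matrix.one_apply, Finset.sum_sub_distrib, hm]

end Centering

section DualVector

variable {n m : ℕ} (A : Matrix (Fin n) (Fin m) ℝ) {Q : Matrix (Fin m) (Fin m) ℝ}

theorem mulVec_mulVec_mul_inv_of_isUnit_det (hS : IsUnit (A * Q * Aᵀ).det) (v : Fin n → ℝ) :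
    A *ᵥ ((Q * Aᵀ * (A * Q * Aᵀ)⁻¹) *ᵥ v) = v := by
  rw [Matrix.mulVec_mulVec, ← Matrix.mul_assoc, ← Matrix.mul_assoc,
    Matrix.mul_nonsing_inv _ hS, Matrix.one_mulVec]

variable {A} {y : Fin m → ℝ}

theorem dotProduct_mul_transpose_mulVec (hQ : Qᵀ = Q) (hQy : Q *ᵥ y = y) (x : Fin n → ℝ) :
    y ⬝ᵥ ((Q * Aᵀ) *ᵥ x) = (A *ᵥ y) ⬝ᵥ x := by
  rw [Matrix.dotProduct_mulVec, ← Matrix.vecMul_vecMul, Matrix.vecMul_transpose,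
    ← Matrix.mulVec_transpose, hQ, hQy]

theorem dotProduct_one_eq_zero_of_mulVec_eq_self (hQ : Qᵀ = Q) (hQ1 : Q *ᵥ (1 : Fin m → ℝ) = 0)
    (hQy : Q *ᵥ y = y) : y ⬝ᵥ (1 : Fin m → ℝ) = 0 := by
  rw [← hQy, dotProduct_comm, Matrix.dotProduct_mulVec, ← hQ, Matrix.vecMul_transpose, hQ1,
    zero_dotProduct]

end DualVector

theorem dotProduct_sub_le_of_mem_box {ι : Type*} [Fintype ι] {l u z z' : ι → ℝ}
    (hlz : l ≤ z) (hzu : z ≤ u) (hlz' : l ≤ z') (hz'u : z' ≤ u) (y : ι → ℝ) :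
    y ⬝ᵥ (z' - z) ≤ (u - l) ⬝ᵥ fun i => |y i| := by
  refine Finset.sum_le_sum fun i _ => ?_
  calc y i * (z' i - z i) ≤ |y i| * |z' i - z i| := (le_abs_self _).trans (abs_mul _ _).le
    _ ≤ |y i| * (u i - l i) :=
      mul_le_mul_of_nonneg_left (abs_sub_le_of_le_of_le (hlz' i) (hz'u i) (hlz i) (hzu i))
        (abs_nonneg _)
    _ = (u i - l i) * |y i| := mul_comm _ _

theorem sSup_sub_sInf_le_of_forall_sub_le {T : Set ℝ} {c : ℝ} (hc : 0 ≤ c)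
    (h : ∀ s ∈ T, ∀ t ∈ T, s - t ≤ c) : sSup T - sInf T ≤ c := by
  rcases T.eq_empty_or_nonempty with rfl | hT
  · simpa using hc
  have hsup : sSup T ≤ sInf T + c := csSup_le hT fun s hs => by
    have : s - c ≤ sInf T := le_csInf hT fun t ht => by linarith [h s hs t ht]
    linarith
  linarith

theorem real_inner_eq_ofLp_dotProduct {n : ℕ} (v x : EuclideanSpace ℝ (Fin n)) :
    ⟪v, x⟫_ℝ = v.ofLp ⬝ᵥ x.ofLp := by
  rw [EuclideanSpace.inner_eq_star_dotProduct, star_trivial, dotProduct_comm]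

section Localization

variable {n m : ℕ} {A : Matrix (Fin n) (Fin m) ℝ} {xim xip : Fin m → ℝ} {y : Fin m → ℝ}

theorem dotProduct_residual (hQy : Qm m *ᵥ y = y) (x : EuclideanSpace ℝ (Fin n)) (α : ℝ) :
    y ⬝ᵥ ((Qm m).mulVec (omegaV A) - (2 : ℝ) • ((Qm m * Aᵀ).mulVec x) + α • (1 : Fin m → ℝ)) =
      y ⬝ᵥ (Qm m *ᵥ omegaV A) - 2 * ⟪toE (A *ᵥ y), x⟫_ℝ := by
  rw [dotProduct_add, dotProduct_sub, dotProduct_smul, dotProduct_smul,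
    dotProduct_one_eq_zero_of_mulVec_eq_self Qm_transpose Qm_mulVec_one hQy,
    dotProduct_mul_transpose_mulVec Qm_transpose hQy, real_inner_eq_ofLp_dotProduct]
  simp [toE]

theorem inner_sub_inner_le_of_mem_Xd (hQy : Qm m *ᵥ y = y) {x x' : EuclideanSpace ℝ (Fin n)}
    (hx : x ∈ Xd A xim xip) (hx' : x' ∈ Xd A xim xip) :
    ⟪toE (A *ᵥ y), x⟫_ℝ - ⟪toE (A *ᵥ y), x'⟫_ℝ ≤ (2 : ℝ)⁻¹ * ((xip - xim) ⬝ᵥ fun i => |y i|) := by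
  obtain ⟨α, hlo, hhi⟩ := hx
  obtain ⟨α', hlo', hhi'⟩ := hx'
  have := dotProduct_sub_le_of_mem_box hlo hhi hlo' hhi' y
  rw [dotProduct_sub, dotProduct_residual hQy, dotProduct_residual hQy] at this
  linarith

end Localization

theorem stmt1_general {n m : ℕ} (A : Matrix (Fin n) (Fin m) ℝ) (xim xip : Fin m → ℝ) (hle : xim ≤ xip)
    (hpd : (A * Qm m * Aᵀ).PosDef)
    (v : EuclideanSpace ℝ (Fin n)) :
    dwidth v (Xd A xim xip) ≤
      (2 : ℝ)⁻¹ *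
        ((xip - xim) ⬝ᵥ fun i => |((Qm m * Aᵀ * (A * Qm m * Aᵀ)⁻¹).mulVec v) i|) := by
  set y := (Qm m * Aᵀ * (A * Qm m * Aᵀ)⁻¹) *ᵥ v with hy
  have hAy : toE (A *ᵥ y) = v :=
    congrArg toE (mulVec_mulVec_mul_inv_of_isUnit_det A (isUnit_iff_ne_zero.mpr hpd.det_pos.ne') v)
  have hQy : Qm m *ᵥ y = y := by
    rw [hy, Matrix.mulVec_mulVec, ← Matrix.mul_assoc, ← Matrix.mul_assoc, Qm_mul_Qm]
  have hW : 0 ≤ (xip - xim) ⬝ᵥ fun i => |y i| :=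
    dotProduct_nonneg_of_nonneg (sub_nonneg.mpr hle) fun i => abs_nonneg _
  refine sSup_sub_sInf_le_of_forall_sub_le (by positivity) ?_
  rintro _ ⟨x, hx, rfl⟩ _ ⟨x', hx', rfl⟩
  simpa only [hAy] using inner_sub_inner_le_of_mem_Xd hQy hx hx'

/-- If S(A) = A Q_m Aᵀ ≻ 0, then for every unit vector v,
width_v(𝒳_d) ≤ (1/2) wᵀ |Q_m Aᵀ S(A)⁻¹ v|, with w = ξ⁺ − ξ⁻. -/
theorem stmt1 {n m : ℕ} (A : Matrix (Fin n) (Fin m) ℝ) (xim xip : Fin m → ℝ) (hle : xim ≤ xip)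
    (hpd : (A * Qm m * Aᵀ).PosDef)
    (v : EuclideanSpace ℝ (Fin n)) (hv : ‖v‖ = 1) :
    dwidth v (Xd A xim xip) ≤
      (2 : ℝ)⁻¹ *
        ((xip - xim) ⬝ᵥ fun i => |((Qm m * Aᵀ * (A * Qm m * Aᵀ)⁻¹).mulVec v) i|) :=
  stmt1_general A xim xip hle hpd v
end
end

section
/- Assume the centered scatter matrix S(A) = A Q_m Aᵀ is positive definite. Then the Euclidean diameter of the polyhedral localization set satisfies diam(𝒳_d) ≤ ‖w‖₂ / (2 √(λ_min(S(A)))), where λ_min(S(A)) denotes the smallest eigenvalue of S(A). -/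
open Matrix
open scoped InnerProductSpace

noncomputable section

/-! For `x, y ∈ 𝒳_d` the residual vectors `Q_m ω − 2 Q_m Aᵀ x + α𝟙` and `Q_m ω − 2 Q_m Aᵀ y + β𝟙`
both lie in the box `[ξ⁻, ξ⁺]`, so their difference has norm at most `‖w‖`. The orthogonal
projector `Q_m` can only shrink it, and it kills `(α − β)𝟙`, leaving `−2 Q_m Aᵀ (x − y)`, whose
squared norm is `4 (x − y)ᵀ S(A) (x − y) ≥ 4 λ_min ‖x − y‖²`. -/

open WithLp

lemma norm_toLp_sq {ι : Type*} [Fintype ι] (v : ι → ℝ) : ‖toLp 2 v‖ ^ 2 = v ⬝ᵥ v := by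
  rw [← real_inner_self_eq_norm_sq, EuclideanSpace.inner_toLp_toLp, star_trivial]

lemma dotProduct_sub_self_le_of_mem_Icc {ι : Type*} [Fintype ι] {l u a b : ι → ℝ}
    (ha : a ∈ Set.Icc l u) (hb : b ∈ Set.Icc l u) : (a - b) ⬝ᵥ (a - b) ≤ (u - l) ⬝ᵥ (u - l) :=
  Finset.sum_le_sum fun i _ => mul_self_le_mul_self_of_le_of_neg_le
    (by simp only [Pi.sub_apply]; linarith [ha.2 i, hb.1 i])
    (by simp only [Pi.sub_apply]; linarith [ha.1 i, hb.2 i])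

namespace Matrix

variable {ι κ R : Type*} [Fintype ι] [Fintype κ] [CommSemiring R]

lemma IsSymm.mulVec_dotProduct {P : Matrix ι ι R} (hP : P.IsSymm) (a b : ι → R) :
    P *ᵥ a ⬝ᵥ b = a ⬝ᵥ P *ᵥ b := by
  rw [dotProduct_mulVec, ← vecMul_transpose, hP.eq]

lemma IsSymm.mulVec_dotProduct_mulVec_self_of_isIdempotentElem {P : Matrix ι ι R} (hP : P.IsSymm)
    (hP' : IsIdempotentElem P) (z : ι → R) : P *ᵥ z ⬝ᵥ P *ᵥ z = z ⬝ᵥ P *ᵥ z := by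
  rw [hP.mulVec_dotProduct, mulVec_mulVec, hP'.eq]

lemma IsSymm.mulVec_dotProduct_mulVec_self_le {P : Matrix ι ι ℝ} (hP : P.IsSymm)
    (hP' : IsIdempotentElem P) (z : ι → ℝ) : P *ᵥ z ⬝ᵥ P *ᵥ z ≤ z ⬝ᵥ z := by
  have h := hP.mulVec_dotProduct_mulVec_self_of_isIdempotentElem hP' z
  have hres : 0 ≤ (z - P *ᵥ z) ⬝ᵥ (z - P *ᵥ z) := Finset.sum_nonneg fun i _ => mul_self_nonneg _
  simp only [sub_dotProduct, dotProduct_sub, dotProduct_comm (P *ᵥ z) z] at hres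
  linarith

lemma dotProduct_mul_mul_transpose_mulVec {P : Matrix κ κ R} (hP : P.IsSymm)
    (hP' : IsIdempotentElem P) (A : Matrix ι κ R) (d : ι → R) :
    d ⬝ᵥ (A * P * Aᵀ) *ᵥ d = P *ᵥ (Aᵀ *ᵥ d) ⬝ᵥ P *ᵥ (Aᵀ *ᵥ d) := by
  rw [hP.mulVec_dotProduct_mulVec_self_of_isIdempotentElem hP', ← mulVec_mulVec, ← mulVec_mulVec,
    dotProduct_mulVec, mulVec_transpose]

lemma IsHermitian.iInf_eigenvalues_mul_dotProduct_le [DecidableEq ι] {S : Matrix ι ι ℝ}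
    (hS : S.IsHermitian) (d : ι → ℝ) : (⨅ j, hS.eigenvalues j) * (d ⬝ᵥ d) ≤ d ⬝ᵥ S *ᵥ d := by
  set U : Matrix ι ι ℝ := (hS.eigenvectorUnitary : Matrix ι ι ℝ)
  have hUt : star U = Uᵀ := conjTranspose_eq_transpose_of_trivial U
  set y := Uᵀ *ᵥ d
  have hyy : y ⬝ᵥ y = d ⬝ᵥ d := by
    rw [dotProduct_mulVec, vecMul_transpose, mulVec_mulVec, ← hUt,
      mem_unitaryGroup_iff.mp hS.eigenvectorUnitary.2, one_mulVec]
  have hSd : d ⬝ᵥ S *ᵥ d = ∑ i, hS.eigenvalues i * (y i * y i) := by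
    conv_lhs => rw [hS.spectral_theorem, Unitary.conjStarAlgAut_apply, hUt]
    rw [← mulVec_mulVec, ← mulVec_mulVec, dotProduct_mulVec, ← mulVec_transpose]
    simp only [mulVec_diagonal, dotProduct]
    exact Finset.sum_congr rfl fun i _ => by
      simp only [Function.comp_apply, RCLike.ofReal_real_eq_id, id]
      ring
  rw [hSd, ← hyy, dotProduct, Finset.mul_sum]
  exact Finset.sum_le_sum fun i _ =>
    mul_le_mul_of_nonneg_right (ciInf_le (Finite.bddBelow_range _) i) (mul_self_nonneg _)

lemma PosDef.iInf_eigenvalues_pos [DecidableEq ι] [Nonempty ι] {S : Matrix ι ι ℝ}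
    (hS : S.PosDef) : 0 < ⨅ j, hS.1.eigenvalues j := by
  obtain ⟨j, hj⟩ := exists_eq_ciInf_of_finite (f := hS.1.eigenvalues)
  exact hj ▸ hS.eigenvalues_pos j

end Matrix

lemma le_div_two_mul_sqrt_of_four_mul_mul_sq_le {a b l : ℝ} (ha : 0 ≤ a) (hb : 0 ≤ b)
    (hl : 0 < l) (h : 4 * l * a ^ 2 ≤ b ^ 2) : a ≤ b / (2 * √l) := by
  rw [le_div_iff₀ (by positivity), ← pow_le_pow_iff_left₀ (by positivity) hb two_ne_zero]
  rw [mul_pow, mul_pow, Real.sq_sqrt hl.le]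
  linarith

lemma onesM_mul_self (m : ℕ) : onesM m * onesM m = (m : ℝ) • onesM m := by
  ext i j
  simp [onesM, mul_apply]

lemma Qm_isSymm (m : ℕ) : (Qm m).IsSymm := by
  ext i j
  simp [Qm, onesM, one_apply, eq_comm]

lemma Qm_isIdempotentElem (m : ℕ) : IsIdempotentElem (Qm m) := by
  obtain rfl | hm := Nat.eq_zero_or_pos m
  · exact Subsingleton.elim _ _
  have hm' : (m : ℝ) ≠ 0 := Nat.cast_ne_zero.mpr hm.ne'
  simp only [IsIdempotentElem, Qm, sub_mul, mul_sub, one_mul, mul_one, smul_mul_assoc,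
    mul_smul_comm, onesM_mul_self, smul_smul, inv_mul_cancel₀ hm', one_smul, sub_self, smul_zero]
  abel

lemma Qm_mulVec_smul_one (m : ℕ) (c : ℝ) : Qm m *ᵥ (c • 1) = 0 := by
  funext i
  have hm : (m : ℝ) ≠ 0 := by
    have := i.pos
    positivity
  simp [Qm, onesM, mulVec, dotProduct, one_apply, sub_mul, Finset.sum_sub_distrib, hm]

def centeredResidual {n m : ℕ} (A : Matrix (Fin n) (Fin m) ℝ) (x : Fin n → ℝ) (α : ℝ) :
    Fin m → ℝ :=
  Qm m *ᵥ omegaV A - (2 : ℝ) • ((Qm m * Aᵀ) *ᵥ x) + α • 1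

lemma mem_Xd_iff {n m : ℕ} {A : Matrix (Fin n) (Fin m) ℝ} {xim xip : Fin m → ℝ}
    {x : EuclideanSpace ℝ (Fin n)} :
    x ∈ Xd A xim xip ↔ ∃ α, centeredResidual A x α ∈ Set.Icc xim xip :=
  Iff.rfl

lemma Qm_mulVec_centeredResidual {n m : ℕ} (A : Matrix (Fin n) (Fin m) ℝ) (x : Fin n → ℝ)
    (α : ℝ) :
    Qm m *ᵥ centeredResidual A x α = Qm m *ᵥ omegaV A - (2 : ℝ) • (Qm m *ᵥ (Aᵀ *ᵥ x)) := by
  rw [centeredResidual, mulVec_add, mulVec_sub, mulVec_smul, Qm_mulVec_smul_one, mulVec_mulVec,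
    mulVec_mulVec, ← Matrix.mul_assoc, (Qm_isIdempotentElem m).eq, ← mulVec_mulVec, add_zero]

lemma Qm_mulVec_centeredResidual_sub {n m : ℕ} (A : Matrix (Fin n) (Fin m) ℝ) (x y : Fin n → ℝ)
    (α β : ℝ) :
    Qm m *ᵥ (centeredResidual A x α - centeredResidual A y β) =
      (-2 : ℝ) • (Qm m *ᵥ (Aᵀ *ᵥ (x - y))) := by
  rw [mulVec_sub, Qm_mulVec_centeredResidual, Qm_mulVec_centeredResidual, mulVec_sub, mulVec_sub]
  module

theorem four_mul_iInf_eigenvalues_mul_dist_sq_le {n m : ℕ} {A : Matrix (Fin n) (Fin m) ℝ}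
    {xim xip : Fin m → ℝ} (hS : (A * Qm m * Aᵀ).IsHermitian) {x y : EuclideanSpace ℝ (Fin n)}
    (hx : x ∈ Xd A xim xip) (hy : y ∈ Xd A xim xip) :
    4 * (⨅ j, hS.eigenvalues j) * dist x y ^ 2 ≤ ‖toE (xip - xim)‖ ^ 2 := by
  obtain ⟨α, hxα⟩ := mem_Xd_iff.mp hx
  obtain ⟨β, hyβ⟩ := mem_Xd_iff.mp hy
  set d : Fin n → ℝ := ofLp x - ofLp y
  set z := centeredResidual A x α - centeredResidual A y β
  calc 4 * (⨅ j, hS.eigenvalues j) * dist x y ^ 2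
      = 4 * ((⨅ j, hS.eigenvalues j) * (d ⬝ᵥ d)) := by
        rw [dist_eq_norm, ← toLp_ofLp 2 (x - y), norm_toLp_sq, ofLp_sub, mul_assoc]
    _ ≤ 4 * (d ⬝ᵥ (A * Qm m * Aᵀ) *ᵥ d) := by
        gcongr
        exact hS.iInf_eigenvalues_mul_dotProduct_le d
    _ = Qm m *ᵥ z ⬝ᵥ Qm m *ᵥ z := by
        rw [Qm_mulVec_centeredResidual_sub,
          dotProduct_mul_mul_transpose_mulVec (Qm_isSymm m) (Qm_isIdempotentElem m)]
        simp only [smul_dotProduct, dotProduct_smul, smul_eq_mul]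
        ring
    _ ≤ z ⬝ᵥ z := (Qm_isSymm m).mulVec_dotProduct_mulVec_self_le (Qm_isIdempotentElem m) z
    _ ≤ (xip - xim) ⬝ᵥ (xip - xim) := dotProduct_sub_self_le_of_mem_Icc hxα hyβ
    _ = ‖toE (xip - xim)‖ ^ 2 := (norm_toLp_sq _).symm

theorem stmt4_general {n m : ℕ} (A : Matrix (Fin n) (Fin m) ℝ) (xim xip : Fin m → ℝ)
    (hpd : (A * Qm m * Aᵀ).PosDef) :
    EMetric.diam (Xd A xim xip) ≤
      ENNReal.ofReal (‖toE (xip - xim)‖ / (2 * Real.sqrt (⨅ j, hpd.1.eigenvalues j))) := by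
  rcases isEmpty_or_nonempty (Fin n) with _ | _
  · exact (Metric.ediam_subsingleton Set.subsingleton_of_subsingleton).trans_le zero_le
  refine Metric.ediam_le fun x hx y hy => ?_
  rw [edist_dist]
  refine ENNReal.ofReal_le_ofReal (le_div_two_mul_sqrt_of_four_mul_mul_sq_le dist_nonneg
    (norm_nonneg _) hpd.iInf_eigenvalues_pos ?_)
  exact four_mul_iInf_eigenvalues_mul_dist_sq_le hpd.1 hx hy

/-- If S(A) = A Q_m Aᵀ ≻ 0, then
diam(𝒳_d) ≤ ‖w‖₂ / (2 √(λ_min(S(A)))), where w = ξ⁺ − ξ⁻ and λ_min is the smallest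
eigenvalue of S(A). -/
theorem stmt4 {n m : ℕ} (A : Matrix (Fin n) (Fin m) ℝ) (xim xip : Fin m → ℝ) (hle : xim ≤ xip)
    (hpd : (A * Qm m * Aᵀ).PosDef) :
    EMetric.diam (Xd A xim xip) ≤
      ENNReal.ofReal (‖toE (xip - xim)‖ / (2 * Real.sqrt (⨅ j, hpd.1.eigenvalues j))) :=
  stmt4_general A xim xip hpd
end
end

section
/- For the uniform weight p = (1/m)𝟙, the aggregated squared radius satisfies ρ(p)² = (1/m) Σᵢ ξᵢ⁺ − (1/m) tr S(A), where S(A) = A Q_m Aᵀ; consequently, any subset 𝒳 of ℋ = ∩ᵢ {x : ‖x − a⁽ⁱ⁾‖₂ ≤ √(ξᵢ⁺)} satisfies diam(𝒳) ≤ 2 √((1/m) Σᵢ ξᵢ⁺ − (1/m) tr S(A)). -/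
open Matrix
open scoped InnerProductSpace

noncomputable section

/-! With `c` the centroid of the anchors, the parallel-axis identity
`∑ᵢ ‖x − a⁽ⁱ⁾‖² = m ‖x − c‖² + ∑ᵢ ‖a⁽ⁱ⁾ − c‖²`, together with `tr S(A) = ∑ᵢ ‖a⁽ⁱ⁾ − c‖²`
(the columns of `A Q_m` are the centred anchors), gives both claims: at `x = 0` it turns
`ρ(p)² = (1/m) ∑ᵢ ξᵢ⁺ − (1/m) ∑ᵢ ωᵢ + ‖c‖²` into the stated expression, and for `x ∈ ℋ` its
left side is at most `∑ᵢ ξᵢ⁺`, so `ℋ` lies in the closed ball of radius `ρ(p)` about `c`. -/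

open Finset

theorem sum_norm_sub_sq_eq_card_mul_add {F ι : Type*} [NormedAddCommGroup F]
    [InnerProductSpace ℝ F] (s : Finset ι) (a : ι → F) {c : F}
    (hc : (#s : ℝ) • c = ∑ i ∈ s, a i) (x : F) :
    ∑ i ∈ s, ‖x - a i‖ ^ 2 = #s * ‖x - c‖ ^ 2 + ∑ i ∈ s, ‖a i - c‖ ^ 2 := by
  have hdev : ∑ i ∈ s, (a i - c) = 0 := by
    rw [sum_sub_distrib, sum_const, ← Nat.cast_smul_eq_nsmul ℝ, hc, sub_self]
  calc ∑ i ∈ s, ‖x - a i‖ ^ 2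
      = ∑ i ∈ s, (‖x - c‖ ^ 2 - 2 * ⟪x - c, a i - c⟫_ℝ + ‖a i - c‖ ^ 2) := by
        refine sum_congr rfl fun i _ => ?_
        rw [← norm_sub_sq_real, sub_sub_sub_cancel_right]
    _ = #s * ‖x - c‖ ^ 2 + ∑ i ∈ s, ‖a i - c‖ ^ 2 := by
        rw [sum_add_distrib, sum_sub_distrib, ← mul_sum, ← inner_sum, hdev, inner_zero_right]
        simp

theorem Metric.ediam_le_ofReal_two_mul_of_subset_closedBall {α : Type*} [PseudoMetricSpace α]
    {s : Set α} {x : α} {r : ℝ} (h : s ⊆ Metric.closedBall x r) :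
    Metric.ediam s ≤ ENNReal.ofReal (2 * r) :=
  Metric.ediam_le fun a ha b hb => by
    rw [edist_dist]
    refine ENNReal.ofReal_le_ofReal ?_
    linarith [dist_triangle_right a b x, Metric.mem_closedBall.1 (h ha),
      Metric.mem_closedBall.1 (h hb)]

theorem inner_colE {n m : ℕ} (A B : Matrix (Fin n) (Fin m) ℝ) (i : Fin m) :
    ⟪colE A i, colE B i⟫_ℝ = ∑ k, A k i * B k i := by
  simp [colE, toE, PiLp.inner_apply, mul_comm]

theorem trace_mul_transpose_eq_sum_inner_colE {n m : ℕ} (A B : Matrix (Fin n) (Fin m) ℝ) :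
    (A * Bᵀ).trace = ∑ i, ⟪colE A i, colE B i⟫_ℝ := by
  simp only [inner_colE, Matrix.trace, Matrix.diag, Matrix.mul_apply, Matrix.transpose_apply]
  exact Finset.sum_comm

/-- The centroid `A p = (1/m) ∑ᵢ a⁽ⁱ⁾` of the anchors, `p` the uniform weight. -/
def anchorCentroid {n m : ℕ} (A : Matrix (Fin n) (Fin m) ℝ) : EuclideanSpace ℝ (Fin n) :=
  toE (A *ᵥ fun _ => (m : ℝ)⁻¹)

theorem card_smul_anchorCentroid {n m : ℕ} (hm : m ≠ 0) (A : Matrix (Fin n) (Fin m) ℝ) :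
    (m : ℝ) • anchorCentroid A = ∑ i, colE A i := by
  ext k
  simp only [anchorCentroid, colE, toE, Matrix.mulVec, dotProduct, PiLp.smul_apply, smul_eq_mul,
    WithLp.ofLp_sum, Finset.sum_apply, ← sum_mul]
  field_simp

theorem colE_mul_Qm {n m : ℕ} (A : Matrix (Fin n) (Fin m) ℝ) (i : Fin m) :
    colE (A * Qm m) i = colE A i - anchorCentroid A := by
  ext k
  simp [colE, anchorCentroid, toE, Qm, onesM, Matrix.mul_apply, Matrix.mulVec, dotProduct, mul_sub,
    sum_sub_distrib, Matrix.one_apply]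

theorem trace_centered_scatter {n m : ℕ} (hm : m ≠ 0) (A : Matrix (Fin n) (Fin m) ℝ) :
    (A * Qm m * Aᵀ).trace = ∑ i, ‖colE A i - anchorCentroid A‖ ^ 2 := by
  have hdev : ∑ i, (colE A i - anchorCentroid A) = 0 := by
    rw [sum_sub_distrib, sum_const, card_univ, Fintype.card_fin, ← Nat.cast_smul_eq_nsmul ℝ,
      card_smul_anchorCentroid hm, sub_self]
  calc (A * Qm m * Aᵀ).trace
      = ∑ i, ⟪colE A i - anchorCentroid A, colE A i⟫_ℝ := by
        simp only [trace_mul_transpose_eq_sum_inner_colE, colE_mul_Qm]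
    _ = ∑ i, ‖colE A i - anchorCentroid A‖ ^ 2 := by
        have hc : ∑ i, ⟪colE A i - anchorCentroid A, anchorCentroid A⟫_ℝ = 0 := by
          rw [← sum_inner, hdev, inner_zero_left]
        simp only [← real_inner_self_eq_norm_sq, inner_sub_right, sum_sub_distrib, hc, sub_zero]

theorem rho2_uniform_eq_sum_omegaV {n m : ℕ} (A : Matrix (Fin n) (Fin m) ℝ)
    (xip : Fin m → ℝ) :
    rho2 A xip (fun _ => (m : ℝ)⁻¹) =
      (m : ℝ)⁻¹ * ∑ i, xip i - (m : ℝ)⁻¹ * ∑ i, omegaV A i + ‖anchorCentroid A‖ ^ 2 := by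
  simp only [rho2, anchorCentroid, dotProduct, Pi.sub_apply, mul_sub, sum_sub_distrib, ← mul_sum]

theorem sum_omegaV {n m : ℕ} (hm : m ≠ 0) (A : Matrix (Fin n) (Fin m) ℝ) :
    ∑ i, omegaV A i = m * ‖anchorCentroid A‖ ^ 2 + (A * Qm m * Aᵀ).trace := by
  have := sum_norm_sub_sq_eq_card_mul_add univ (colE A)
    (by simpa using card_smul_anchorCentroid hm A) 0
  simpa [omegaV, trace_centered_scatter hm] using this

theorem rho2_uniform_eq_trace {n m : ℕ} (hm : m ≠ 0) (A : Matrix (Fin n) (Fin m) ℝ)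
    (xip : Fin m → ℝ) :
    rho2 A xip (fun _ => (m : ℝ)⁻¹) =
      (m : ℝ)⁻¹ * ∑ i, xip i - (m : ℝ)⁻¹ * (A * Qm m * Aᵀ).trace := by
  rw [rho2_uniform_eq_sum_omegaV, sum_omegaV hm]
  field_simp
  ring

theorem norm_sub_anchorCentroid_sq_le {n m : ℕ} (hm : m ≠ 0) (A : Matrix (Fin n) (Fin m) ℝ)
    {xip : Fin m → ℝ} (hxip : ∀ i, 0 ≤ xip i) {x : EuclideanSpace ℝ (Fin n)}
    (hx : x ∈ Hset A xip) :
    ‖x - anchorCentroid A‖ ^ 2 ≤ (m : ℝ)⁻¹ * ∑ i, xip i - (m : ℝ)⁻¹ * (A * Qm m * Aᵀ).trace := by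
  have hball : ∑ i, ‖x - colE A i‖ ^ 2 ≤ ∑ i, xip i :=
    sum_le_sum fun i _ => (Real.le_sqrt (norm_nonneg _) (hxip i)).1 (hx i)
  have := sum_norm_sub_sq_eq_card_mul_add univ (colE A)
    (by simpa using card_smul_anchorCentroid hm A) x
  rw [card_univ, Fintype.card_fin, ← trace_centered_scatter hm] at this
  have hm' : (0 : ℝ) < m := by positivity
  rw [← mul_sub, le_inv_mul_iff₀ hm']
  linarith

/-- For the uniform weight p = (1/m)𝟙,
ρ(p)² = (1/m) Σᵢ ξᵢ⁺ − (1/m) tr S(A); consequently any subset 𝒳 of ℋ satisfies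
diam(𝒳) ≤ 2 √((1/m) Σᵢ ξᵢ⁺ − (1/m) tr S(A)). -/
theorem stmt10 {n m : ℕ} (hm : 0 < m) (A : Matrix (Fin n) (Fin m) ℝ) (xip : Fin m → ℝ)
    (hxip : ∀ i, 0 ≤ xip i) :
    rho2 A xip (fun _ => (m : ℝ)⁻¹) =
        (m : ℝ)⁻¹ * ∑ i, xip i - (m : ℝ)⁻¹ * (A * Qm m * Aᵀ).trace ∧
      ∀ X : Set (EuclideanSpace ℝ (Fin n)), X ⊆ Hset A xip →
        EMetric.diam X ≤
          ENNReal.ofReal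
            (2 * Real.sqrt ((m : ℝ)⁻¹ * ∑ i, xip i - (m : ℝ)⁻¹ * (A * Qm m * Aᵀ).trace)) := by
  refine ⟨rho2_uniform_eq_trace hm.ne' A xip, fun X hX => ?_⟩
  refine Metric.ediam_le_ofReal_two_mul_of_subset_closedBall (x := anchorCentroid A) fun x hx => ?_
  rw [Metric.mem_closedBall, dist_eq_norm]
  exact Real.le_sqrt_of_sq_le (norm_sub_anchorCentroid_sq_le hm.ne' A hxip (hX hx))
end
end

section
/- Let ℋ = ∩ᵢ {x ∈ ℝⁿ : ‖x − a⁽ⁱ⁾‖₂ ≤ √(ξᵢ⁺)} be nonempty and let h_ℋ(v) = sup over x ∈ ℋ of vᵀx be its support function. Then for every v ∈ ℝⁿ and every weight p in the probability simplex Δ_m, h_ℋ(v) ≤ vᵀ(Ap) + ‖v‖₂ ρ(p), where ρ(p)² = pᵀ(ξ⁺ − ω) + ‖Ap‖₂². -/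
/-! Averaging the constraints `‖x - a⁽ⁱ⁾‖² ≤ ξᵢ⁺` with the weights `p` and using the variance
identity `∑ pᵢ ‖x - aᵢ‖² = ‖x - Ap‖² + pᵀω - ‖Ap‖²` puts `ℋ` inside the closed ball of radius
`ρ(p)` around `Ap`; Cauchy–Schwarz bounds the support function of that ball. -/

open Matrix
open scoped InnerProductSpace

noncomputable section

theorem sum_mul_norm_sub_sq {E ι : Type*} [NormedAddCommGroup E] [InnerProductSpace ℝ E]
    (s : Finset ι) (w : ι → ℝ) (a : ι → E) (hw : ∑ i ∈ s, w i = 1) (x : E) :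
    ∑ i ∈ s, w i * ‖x - a i‖ ^ 2 =
      ‖x - ∑ i ∈ s, w i • a i‖ ^ 2 + ∑ i ∈ s, w i * ‖a i‖ ^ 2 - ‖∑ i ∈ s, w i • a i‖ ^ 2 := by
  simp only [norm_sub_sq_real, inner_sum, real_inner_smul_right, mul_add, mul_sub,
    Finset.sum_add_distrib, Finset.sum_sub_distrib, ← Finset.sum_mul, hw, Finset.mul_sum]
  simp only [mul_left_comm (w _) 2, ← Finset.mul_sum]
  ring

theorem toE_mulVec_eq_sum {n m : ℕ} (A : Matrix (Fin n) (Fin m) ℝ) (p : Fin m → ℝ) :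
    toE (A *ᵥ p) = ∑ i, p i • colE A i := by
  ext k
  simp [toE, colE, Matrix.mulVec, dotProduct, mul_comm]

theorem norm_sub_mulVec_sq_le_rho2 {n m : ℕ} {A : Matrix (Fin n) (Fin m) ℝ} {xip : Fin m → ℝ}
    (hxip : ∀ i, 0 ≤ xip i) {p : Fin m → ℝ} (hp : p ∈ stdSimplex ℝ (Fin m))
    {x : EuclideanSpace ℝ (Fin n)} (hx : x ∈ Hset A xip) :
    ‖x - toE (A *ᵥ p)‖ ^ 2 ≤ rho2 A xip p := by
  have hdist : ∑ i, p i * ‖x - colE A i‖ ^ 2 ≤ ∑ i, p i * xip i := by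
    gcongr with i
    · exact hp.1 i
    · exact (Real.le_sqrt (norm_nonneg _) (hxip i)).1 (hx i)
  have hvar := sum_mul_norm_sub_sq Finset.univ p (colE A) hp.2 x
  rw [rho2, toE_mulVec_eq_sum, dotProduct_sub]
  simp only [dotProduct, omegaV]
  linarith

theorem suppF_le_of_subset_closedBall {n : ℕ} {Ω : Set (EuclideanSpace ℝ (Fin n))}
    (hΩ : Ω.Nonempty) {c : EuclideanSpace ℝ (Fin n)} {r : ℝ} (h : Ω ⊆ Metric.closedBall c r)
    (v : EuclideanSpace ℝ (Fin n)) :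
    suppF Ω v ≤ ⟪v, c⟫_ℝ + ‖v‖ * r := by
  refine csSup_le (hΩ.image _) ?_
  rintro _ ⟨x, hx, rfl⟩
  have hxc : ‖x - c‖ ≤ r := by simpa [dist_eq_norm] using h hx
  calc ⟪v, x⟫_ℝ = ⟪v, c⟫_ℝ + ⟪v, x - c⟫_ℝ := by rw [inner_sub_right]; ring
    _ ≤ ⟪v, c⟫_ℝ + ‖v‖ * ‖x - c‖ := by gcongr; exact real_inner_le_norm _ _
    _ ≤ ⟪v, c⟫_ℝ + ‖v‖ * r := by gcongr

/-- If ℋ is nonempty, then for every v ∈ ℝⁿ and every p ∈ Δ_m,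
h_ℋ(v) ≤ vᵀ(Ap) + ‖v‖₂ ρ(p). -/
theorem stmt12 {n m : ℕ} (A : Matrix (Fin n) (Fin m) ℝ) (xip : Fin m → ℝ)
    (hxip : ∀ i, 0 ≤ xip i) (hne : (Hset A xip).Nonempty)
    (v : EuclideanSpace ℝ (Fin n)) (p : Fin m → ℝ) (hp : p ∈ stdSimplex ℝ (Fin m)) :
    suppF (Hset A xip) v ≤
      ⟪v, toE (A.mulVec p)⟫_ℝ + ‖v‖ * Real.sqrt (rho2 A xip p) := by
  refine suppF_le_of_subset_closedBall hne (fun x hx => ?_) v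
  rw [Metric.mem_closedBall, dist_eq_norm]
  exact Real.le_sqrt_of_sq_le (norm_sub_mulVec_sq_le_rho2 hxip hp hx)
end
end
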